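/- arXiv:2011.00049 — 2 statements merged into one kernel-verified Lean document; each statement's English description precedes it below -/
import Mathlib

section
/- Let α be a shallow affine root with n_J(α) ≥ 2. Then α is decomposable as a shallow affine root: there exists a shallow affine root β such that α − β is also a shallow affine root. -/
/-- Decomposability of shallow affine roots with `n_J ≥ 2`.

Setting as before: affine roots are encoded by coefficient vectors
`c : Fin (ℓ+1) → ℤ` over the simple affine roots, `Φ` is the set of affine
roots, `v i = αᵢ(λ) ≥ 0` are the values of the simple affine roots at the
point `λ` of the closed fundamental alcove, `J = {j | v j ≠ 0}`, the depth of
`c` is `∑ i, c i * v i`, and `c` is *shallow* if its depth lies in `(0,1)`.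

We use Carter's Lemma 3.6.2 (hypothesis `hCarter`): every positive affine root
`α = α_{i₁} + ⋯ + α_{i_m}` admits an ordering of its simple constituents such
that every partial sum `α_{i₁} + ⋯ + α_{i_j}` is an affine root and the
corresponding tail sum is an affine root (or empty).

If `α` is a shallow affine root with `n_J(α) ≥ 2`, then `α` is decomposable as
a shallow affine root: there exists a shallow affine root `β` such that
`α − β` is also a shallow affine root. -/
theorem nJ_ge_two_decomposable (ℓ : ℕ) (Φ : Set (Fin (ℓ + 1) → ℤ))
    (v : Fin (ℓ + 1) → ℝ) (hv : ∀ i, 0 ≤ v i)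
    (J : Finset (Fin (ℓ + 1))) (hJ : ∀ j, j ∈ J ↔ v j ≠ 0)
    (depth : (Fin (ℓ + 1) → ℤ) → ℝ)
    (hdepth : ∀ c, depth c = ∑ i, (c i : ℝ) * v i)
    (hCarter : ∀ c ∈ Φ, 0 < depth c →
      ∃ (m : ℕ) (f : Fin m → Fin (ℓ + 1)),
        c = (∑ k : Fin m, Pi.single (f k) (1 : ℤ)) ∧
        ∀ j : Fin m,
          (∑ k ∈ Finset.univ.filter (fun k => k ≤ j), Pi.single (f k) (1 : ℤ)) ∈ Φ ∧
          ((∑ k ∈ Finset.univ.filter (fun k => ¬ k ≤ j), Pi.single (f k) (1 : ℤ)) ∈ Φ ∨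
            (j : ℕ) + 1 = m))
    (α : Fin (ℓ + 1) → ℤ) (hα : α ∈ Φ)
    (hsh : 0 < depth α ∧ depth α < 1)
    (hnJ : 2 ≤ ∑ j ∈ J, α j) :
    ∃ β, (β ∈ Φ ∧ 0 < depth β ∧ depth β < 1) ∧
        ((α - β) ∈ Φ ∧ 0 < depth (α - β) ∧ depth (α - β) < 1) := by
  obtain ⟨hpos, hlt⟩ := hsh
  obtain ⟨m, f, hαeq, hstep⟩ := hCarter α hα hpos
  -- depth of a sum of singles over a finset S of indices
  have hds : ∀ S : Finset (Fin m),
      depth (∑ k ∈ S, Pi.single (f k) (1 : ℤ)) = ∑ k ∈ S, v (f k) := by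
    intro S
    rw [hdepth]
    have h1 : ∀ i, ((((∑ k ∈ S, Pi.single (f k) (1 : ℤ)) : Fin (ℓ+1) → ℤ) i : ℤ) : ℝ) * v i
        = ∑ k ∈ S, (if i = f k then v i else 0) := by
      intro i
      simp only [Finset.sum_apply, Pi.single_apply, Int.cast_sum, Finset.sum_mul]
      refine Finset.sum_congr rfl fun k _ => ?_
      by_cases h : i = f k <;> simp [h]
    simp only [h1]
    rw [Finset.sum_comm]
    refine Finset.sum_congr rfl fun k _ => ?_
    simp
  -- counting: ∑ j ∈ J, α j = number of k with f k ∈ J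
  have hcount : (2 : ℤ) ≤ (Finset.univ.filter (fun k : Fin m => f k ∈ J)).card := by
    have h1 : ∑ j ∈ J, α j = ∑ k : Fin m, (if f k ∈ J then (1:ℤ) else 0) := by
      have h2 : ∀ j ∈ J, α j = ∑ k : Fin m, (if j = f k then (1:ℤ) else 0) := by
        intro j _
        rw [hαeq]
        simp [Finset.sum_apply, Pi.single_apply]
      rw [Finset.sum_congr rfl h2, Finset.sum_comm]
      refine Finset.sum_congr rfl fun k _ => ?_
      simp [Finset.sum_ite_eq]
    rw [h1] at hnJ
    rw [Finset.sum_ite, Finset.sum_const, Finset.sum_const] at hnJ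
    simpa using hnJ
  have hcard : 1 < (Finset.univ.filter (fun k : Fin m => f k ∈ J)).card := by
    exact_mod_cast lt_of_lt_of_le (by norm_num : (1:ℤ) < 2) hcount
  obtain ⟨a0, ha0, b0, hb0, hab0⟩ := Finset.one_lt_card.mp hcard
  simp only [Finset.mem_filter, Finset.mem_univ, true_and] at ha0 hb0
  -- key argument for a < b
  have key : ∀ a b : Fin m, a < b → f a ∈ J → f b ∈ J →
      ∃ β, (β ∈ Φ ∧ 0 < depth β ∧ depth β < 1) ∧
        ((α - β) ∈ Φ ∧ 0 < depth (α - β) ∧ depth (α - β) < 1) := by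
    intro a b hab hfa hfb
    have hva : 0 < v (f a) := lt_of_le_of_ne (hv _) (Ne.symm ((hJ _).mp hfa))
    have hvb : 0 < v (f b) := lt_of_le_of_ne (hv _) (Ne.symm ((hJ _).mp hfb))
    set P : Fin (ℓ+1) → ℤ := ∑ k ∈ Finset.univ.filter (fun k => k ≤ a), Pi.single (f k) (1 : ℤ) with hP
    set T : Fin (ℓ+1) → ℤ := ∑ k ∈ Finset.univ.filter (fun k => ¬ k ≤ a), Pi.single (f k) (1 : ℤ) with hT
    have hsplit : α = P + T := by
      rw [hαeq, hP, hT, Finset.sum_filter_add_sum_filter_not]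
    have hsub : α - P = T := by rw [hsplit]; ring
    have hdP : depth P = ∑ k ∈ Finset.univ.filter (fun k => k ≤ a), v (f k) := hds _
    have hdT : depth T = ∑ k ∈ Finset.univ.filter (fun k => ¬ k ≤ a), v (f k) := hds _
    have hdPpos : 0 < depth P := by
      rw [hdP]
      refine Finset.sum_pos' (fun k _ => hv _) ⟨a, ?_, hva⟩
      simp
    have hdTpos : 0 < depth T := by
      rw [hdT]
      refine Finset.sum_pos' (fun k _ => hv _) ⟨b, ?_, hvb⟩
      simpa using hab
    have hdsum : depth P + depth T = depth α := by
      rw [hdP, hdT, Finset.sum_filter_add_sum_filter_not, hαeq, hds]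
    obtain ⟨hPΦ, hTΦ'⟩ := hstep a
    have hTΦ : T ∈ Φ := by
      rcases hTΦ' with h | h
      · exact h
      · exfalso
        have : (b : ℕ) < m := b.isLt
        have hba : (a : ℕ) + 1 ≤ (b : ℕ) := hab
        omega
    refine ⟨P, ⟨hPΦ, hdPpos, ?_⟩, ?_, ?_, ?_⟩
    · linarith
    · rwa [hsub]
    · rw [hsub]; linarith
    · rw [hsub]; linarith
  rcases lt_or_gt_of_ne hab0 with h | h
  · exact key a0 b0 h ha0 hb0
  · exact key b0 a0 h hb0 ha0
end

section
/- Let α, β be shallow affine roots at λ (i.e., 0 < α(λ) < 1, 0 < β(λ) < 1) in the affine root system of a split simple group, such that iα + jβ is a shallow affine root for some positive integers i, j. Then α + β is a shallow affine root. -/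
open scoped RealInnerProductSpace

variable {E : Type*} [NormedAddCommGroup E] [InnerProductSpace ℝ E]

/-- A reduced (crystallographic) root system in a real inner product space. -/
structure IsReducedRootSystem (R : Set E) : Prop where
  finite : R.Finite
  ne_zero : (0 : E) ∉ R
  reflect : ∀ a ∈ R, ∀ b ∈ R, b - (2 * ⟪a, b⟫ / ⟪a, a⟫) • a ∈ R
  integral : ∀ a ∈ R, ∀ b ∈ R, ∃ z : ℤ, (z : ℝ) = 2 * ⟪a, b⟫ / ⟪a, a⟫
  reduced : ∀ a ∈ R, ∀ t : ℝ, t • a ∈ R → t = 1 ∨ t = -1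

lemma inner_self_pos' {x : E} (hx : x ≠ 0) : (0:ℝ) < ⟪x, x⟫ := by
  rw [real_inner_self_eq_norm_mul_norm]
  have h := norm_pos_iff.mpr hx
  positivity

lemma IsReducedRootSystem.neg_mem {R : Set E} (hR : IsReducedRootSystem R)
    {a : E} (ha : a ∈ R) : -a ∈ R := by
  have h0 : a ≠ 0 := fun h => hR.ne_zero (h ▸ ha)
  have hpos : (0:ℝ) < ⟪a, a⟫ := inner_self_pos' h0
  have h := hR.reflect a ha a ha
  have h2 : 2 * ⟪a, a⟫ / ⟪a, a⟫ = (2:ℝ) := by field_simp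
  rw [h2] at h
  have h3 : a - (2:ℝ) • a = -a := by
    rw [two_smul]; abel
  rwa [h3] at h

/-- If `u, v` are roots with `⟪u,v⟫ < 0` and `u + v ≠ 0`, then `u + v` is a root. -/
lemma key_lemma {R : Set E} (hR : IsReducedRootSystem R)
    {u v : E} (hu : u ∈ R) (hv : v ∈ R) (hneg : ⟪u, v⟫ < 0) (hne : u + v ≠ 0) :
    u + v ∈ R := by
  have hu0 : u ≠ 0 := fun h => hR.ne_zero (h ▸ hu)
  have hv0 : v ≠ 0 := fun h => hR.ne_zero (h ▸ hv)
  have huu : (0:ℝ) < ⟪u, u⟫ := inner_self_pos' hu0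
  have hvv : (0:ℝ) < ⟪v, v⟫ := inner_self_pos' hv0
  have hnu : (0:ℝ) < ‖u‖ := norm_pos_iff.mpr hu0
  have hnv : (0:ℝ) < ‖v‖ := norm_pos_iff.mpr hv0
  obtain ⟨p, hp⟩ := hR.integral u hu v hv
  obtain ⟨q, hq⟩ := hR.integral v hv u hu
  have hq' : (q:ℝ) = 2 * ⟪u, v⟫ / ⟪v, v⟫ := by rw [hq, real_inner_comm]
  clear hq
  have hq := hq'
  have hcs : ⟪u, v⟫ ^ 2 ≤ (‖u‖ * ‖v‖) ^ 2 := by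
    have h1 := abs_real_inner_le_norm u v
    have h2 := abs_nonneg ⟪u, v⟫
    nlinarith [sq_abs ⟪u, v⟫]
  rcases eq_or_lt_of_le hcs with heq | hlt
  · -- equality in Cauchy–Schwarz: v is a negative multiple of u
    exfalso
    have hfac : (⟪u, v⟫ + ‖u‖ * ‖v‖) * (⟪u, v⟫ - ‖u‖ * ‖v‖) = 0 := by
      linear_combination heq
    have hsum : ⟪u, v⟫ + ‖u‖ * ‖v‖ = 0 := by
      rcases mul_eq_zero.mp hfac with h | h
      · exact h
      · nlinarith
    have hinn : ⟪u, -v⟫ = ‖u‖ * ‖-v‖ := by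
      rw [inner_neg_right, norm_neg]; linarith
    have hray := inner_eq_norm_mul_iff_real.mp hinn
    -- hray : ‖-v‖ • u = ‖u‖ • (-v)
    rw [norm_neg] at hray
    have hveq : v = (-(‖u‖⁻¹ * ‖v‖)) • u := by
      have h1 : (‖u‖)⁻¹ • (‖v‖ • u) = (‖u‖)⁻¹ • (‖u‖ • (-v)) := by rw [hray]
      rw [inv_smul_smul₀ hnu.ne', smul_smul] at h1
      have h2 : v = -((‖u‖⁻¹ * ‖v‖) • u) := by
        rw [h1, neg_neg]
      conv_lhs => rw [h2]
      rw [← neg_smul]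
    have hred := hR.reduced u hu (-(‖u‖⁻¹ * ‖v‖)) (hveq ▸ hv)
    have hposq : 0 < ‖u‖⁻¹ * ‖v‖ := by positivity
    rcases hred with h | h
    · linarith
    · apply hne
      rw [hveq, h, neg_one_smul, add_neg_cancel]
  · -- strict Cauchy–Schwarz : one of the Cartan integers is -1
    have hprod : (p : ℝ) * (q : ℝ) < 4 := by
      rw [hp, hq]
      rw [real_inner_self_eq_norm_mul_norm, real_inner_self_eq_norm_mul_norm]
      rw [div_mul_div_comm]
      rw [div_lt_iff₀ (by positivity)]
      nlinarith
    have hpneg : p ≤ -1 := by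
      have : (p:ℝ) < 0 := by
        rw [hp]; exact div_neg_of_neg_of_pos (by linarith) huu
      have : p < 0 := by exact_mod_cast this
      omega
    have hqneg : q ≤ -1 := by
      have : (q:ℝ) < 0 := by
        rw [hq]; exact div_neg_of_neg_of_pos (by linarith) hvv
      have : q < 0 := by exact_mod_cast this
      omega
    have hprodZ : p * q < 4 := by exact_mod_cast hprod
    have hone : p = -1 ∨ q = -1 := by
      by_contra hcon
      push_neg at hcon
      have h1 : p ≤ -2 := by omega
      have h2 : q ≤ -2 := by omega
      nlinarith
    rcases hone with h | h
    · have href := hR.reflect u hu v hv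
      rw [← hp, h] at href
      have : v - ((-1 : ℤ):ℝ) • u = u + v := by
        push_cast
        rw [neg_one_smul]
        abel
      rwa [this] at href
    · have href := hR.reflect v hv u hu
      rw [real_inner_comm u v, ← hq, h] at href
      have : u - ((-1 : ℤ):ℝ) • v = u + v := by
        push_cast
        rw [neg_one_smul]
        abel
      rwa [this] at href

/-- If `i•a + j•b` is a root with `i, j ≥ 1` and `b ∉ {a, -a}`, then `a + b` is a root. -/
lemma chain_lemma {R : Set E} (hR : IsReducedRootSystem R)
    {a b : E} (ha : a ∈ R) (hb : b ∈ R) (hba : b ≠ a) (hbna : b ≠ -a) :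
    ∀ N i j : ℕ, i + j ≤ N → 1 ≤ i → 1 ≤ j → (i : ℝ) • a + (j : ℝ) • b ∈ R →
      a + b ∈ R := by
  have ha0 : a ≠ 0 := fun h => hR.ne_zero (h ▸ ha)
  have hb0 : b ≠ 0 := fun h => hR.ne_zero (h ▸ hb)
  have hindep : ∀ s t : ℝ, 0 < s → 0 < t → s • a + t • b ≠ 0 := by
    intro s t hs ht h
    have h1 : t • b = (-s) • a := by
      rw [neg_smul]
      exact eq_neg_of_add_eq_zero_right h
    have h2 : b = (t⁻¹ * (-s)) • a := by
      rw [← smul_smul, ← h1, inv_smul_smul₀ ht.ne']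
    have hred := hR.reduced a ha (t⁻¹ * (-s)) (h2 ▸ hb)
    have hltz : t⁻¹ * (-s) < 0 := mul_neg_of_pos_of_neg (by positivity) (by linarith)
    rcases hred with hcase | hcase
    · linarith
    · exact hbna (by rw [h2, hcase, neg_one_smul])
  intro N
  induction N with
  | zero => intro i j h hi hj _; omega
  | succ N ih =>
    intro i j hN hi hj hc
    by_cases hij : i = 1 ∧ j = 1
    · obtain ⟨rfl, rfl⟩ := hij
      simpa using hc
    · set c := (i : ℝ) • a + (j : ℝ) • b with hcdef
      have hc0 : c ≠ 0 := hindep _ _ (by exact_mod_cast hi) (by exact_mod_cast hj)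
      have hcc : (0:ℝ) < ⟪c, c⟫ := inner_self_pos' hc0
      have hexp : ⟪c, c⟫ = (i:ℝ) * ⟪c, a⟫ + (j:ℝ) * ⟪c, b⟫ := by
        rw [hcdef]
        rw [inner_add_right, real_inner_smul_right, real_inner_smul_right]
      have hi1 : (1:ℝ) ≤ (i:ℝ) := by exact_mod_cast hi
      have hj1 : (1:ℝ) ≤ (j:ℝ) := by exact_mod_cast hj
      have hcase : 0 < ⟪c, a⟫ ∨ 0 < ⟪c, b⟫ := by
        by_contra hcon
        push_neg at hcon
        nlinarith [hcon.1, hcon.2]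
      rcases hcase with hpos | hpos
      · -- subtract a
        have hna : -a ∈ R := hR.neg_mem ha
        have hinner : ⟪c, -a⟫ < 0 := by rw [inner_neg_right]; linarith
        have hform : c + -a = ((i - 1 : ℕ) : ℝ) • a + (j : ℝ) • b := by
          rw [hcdef, Nat.cast_sub hi]
          push_cast
          rw [sub_smul, one_smul]
          abel
        rcases Nat.lt_or_ge i 2 with hi2 | hi2
        · -- i = 1, so j ≥ 2, and c - a = j • b ∈ R : contradiction with reduced
          exfalso
          have hieq : i = 1 := by omega
          have hj2 : 2 ≤ j := by
            rcases Nat.lt_or_ge j 2 with h | h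
            · exact absurd ⟨hieq, by omega⟩ hij
            · exact h
          have hne : c + -a ≠ 0 := by
            rw [hform, hieq]
            simp only [Nat.sub_self, Nat.cast_zero, zero_smul, zero_add]
            exact smul_ne_zero (by positivity) hb0
          have hmem := key_lemma hR hc hna hinner hne
          rw [hform, hieq] at hmem
          simp only [Nat.sub_self, Nat.cast_zero, zero_smul, zero_add] at hmem
          rcases hR.reduced b hb (j:ℝ) hmem with h | h
          · have : (j:ℕ) = 1 := by exact_mod_cast h
            omega
          · have : (0:ℝ) < (j:ℝ) := by positivity
            linarith
        · have hne : c + -a ≠ 0 := by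
            rw [hform]
            exact hindep _ _ (by
              have : (1:ℝ) ≤ ((i - 1 : ℕ):ℝ) := by exact_mod_cast Nat.le_sub_of_add_le (by omega)
              linarith) (by linarith)
          have hmem := key_lemma hR hc hna hinner hne
          rw [hform] at hmem
          exact ih (i - 1) j (by omega) (by omega) hj hmem
      · -- subtract b
        have hnb : -b ∈ R := hR.neg_mem hb
        have hinner : ⟪c, -b⟫ < 0 := by rw [inner_neg_right]; linarith
        have hform : c + -b = (i : ℝ) • a + ((j - 1 : ℕ) : ℝ) • b := by
          rw [hcdef, Nat.cast_sub hj]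
          push_cast
          rw [sub_smul, one_smul]
          abel
        rcases Nat.lt_or_ge j 2 with hj2 | hj2
        · exfalso
          have hjeq : j = 1 := by omega
          have hi2 : 2 ≤ i := by
            rcases Nat.lt_or_ge i 2 with h | h
            · exact absurd ⟨by omega, hjeq⟩ hij
            · exact h
          have hne : c + -b ≠ 0 := by
            rw [hform, hjeq]
            simp only [Nat.sub_self, Nat.cast_zero, zero_smul, add_zero]
            exact smul_ne_zero (by positivity) ha0
          have hmem := key_lemma hR hc hnb hinner hne
          rw [hform, hjeq] at hmem
          simp only [Nat.sub_self, Nat.cast_zero, zero_smul, add_zero] at hmem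
          rcases hR.reduced a ha (i:ℝ) hmem with h | h
          · have : (i:ℕ) = 1 := by exact_mod_cast h
            omega
          · have : (0:ℝ) < (i:ℝ) := by positivity
            linarith
        · have hne : c + -b ≠ 0 := by
            rw [hform]
            exact hindep _ _ (by linarith) (by
              have : (1:ℝ) ≤ ((j - 1 : ℕ):ℝ) := by exact_mod_cast Nat.le_sub_of_add_le (by omega)
              linarith)
          have hmem := key_lemma hR hc hnb hinner hne
          rw [hform] at hmem
          exact ih i (j - 1) (by omega) hi (by omega) hmem

/-- Sums of shallow affine roots.  An affine root of the split simple group is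
a functional `x ↦ ⟪a, x⟫ + n` on the apartment `E`, encoded by a pair `(a, n)`
with `a` a root of the underlying reduced root system `R` and `n ∈ ℤ`; it is
*shallow* at the point `λ` if its value at `λ` lies strictly between `0` and
`1`.  If `α = (a, m)` and `β = (b, n)` are shallow affine roots at `λ` and
`iα + jβ` is a shallow affine root for some positive integers `i, j`, then
`α + β` is a shallow affine root. -/
theorem sum_of_shallow_is_shallow (R : Set E) (hR : IsReducedRootSystem R)
    (lam : E) (a b : E) (m n : ℤ) (ha : a ∈ R) (hb : b ∈ R)
    (hα : 0 < ⟪a, lam⟫ + (m : ℝ) ∧ ⟪a, lam⟫ + (m : ℝ) < 1)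
    (hβ : 0 < ⟪b, lam⟫ + (n : ℝ) ∧ ⟪b, lam⟫ + (n : ℝ) < 1)
    (i j : ℕ) (hi : 1 ≤ i) (hj : 1 ≤ j)
    (hroot : (i : ℝ) • a + (j : ℝ) • b ∈ R)
    (hsh : 0 < ⟪(i : ℝ) • a + (j : ℝ) • b, lam⟫ + ((i * m + j * n : ℤ) : ℝ) ∧
      ⟪(i : ℝ) • a + (j : ℝ) • b, lam⟫ + ((i * m + j * n : ℤ) : ℝ) < 1) :
    a + b ∈ R ∧ 0 < ⟪a + b, lam⟫ + ((m + n : ℤ) : ℝ) ∧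
      ⟪a + b, lam⟫ + ((m + n : ℤ) : ℝ) < 1 := by
  have hi1 : (1:ℝ) ≤ (i:ℝ) := by exact_mod_cast hi
  have hj1 : (1:ℝ) ≤ (j:ℝ) := by exact_mod_cast hj
  have hval : ⟪(i : ℝ) • a + (j : ℝ) • b, lam⟫ = (i:ℝ) * ⟪a, lam⟫ + (j:ℝ) * ⟪b, lam⟫ := by
    rw [inner_add_left, real_inner_smul_left, real_inner_smul_left]
  -- arithmetic: x + y < 1 where x, y are the values of the affine roots
  have hlt1 : (⟪a, lam⟫ + (m:ℝ)) + (⟪b, lam⟫ + (n:ℝ)) < 1 := by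
    have h2 := hsh.2
    rw [hval] at h2
    push_cast at h2
    nlinarith [mul_nonneg (sub_nonneg.mpr hi1) hα.1.le, mul_nonneg (sub_nonneg.mpr hj1) hβ.1.le]
  have hgt0 : 0 < (⟪a, lam⟫ + (m:ℝ)) + (⟪b, lam⟫ + (n:ℝ)) := by
    have := hα.1; have := hβ.1; linarith
  -- b ≠ a
  have hba : b ≠ a := by
    intro h
    subst h
    have heq : (i : ℝ) • b + (j : ℝ) • b = ((i + j : ℕ) : ℝ) • b := by
      push_cast
      rw [add_smul]
    rw [heq] at hroot
    rcases hR.reduced b hb _ hroot with h | h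
    · have : i + j = 1 := by exact_mod_cast h
      omega
    · have : (0:ℝ) < ((i + j : ℕ):ℝ) := by positivity
      linarith
  -- b ≠ -a
  have hbna : b ≠ -a := by
    intro h
    rw [h, inner_neg_left] at hβ hgt0 hlt1
    have hz1 : (0:ℝ) < ((m + n : ℤ):ℝ) := by push_cast; linarith
    have hz2 : ((m + n : ℤ):ℝ) < 1 := by push_cast; linarith
    have h1 : 0 < m + n := by exact_mod_cast hz1
    have h2 : m + n < 1 := by exact_mod_cast hz2
    omega
  refine ⟨chain_lemma hR ha hb hba hbna (i + j) i j le_rfl hi hj hroot, ?_, ?_⟩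
  · rw [inner_add_left]; push_cast; linarith
  · rw [inner_add_left]; push_cast; linarith
end
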